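/- arXiv:2602.22847 — 2 statements merged into one kernel-verified Lean document; each statement's English description precedes it below -/
import Mathlib

section
/- Local Kemenization correctness for an adjacent transposition: if a ranking σ places item i immediately before item j but a strict majority prefers j to i (p_{ij} < 1/2 with p_{ij} + p_{ji} = 1), then swapping i and j strictly decreases the total Kendall tau distance ∑_v d_τ(σ, σ_v) to the n voter rankings. -/
/-- The Kendall tau distance: the number of pairs `i < j` on which the two
permutations disagree in relative order. -/
def kendallTau (m : ℕ) (σ σ' : Equiv.Perm (Fin m)) : ℕ :=
  (Finset.univ.filter (fun p : Fin m × Fin m =>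
    p.1 < p.2 ∧ ((σ p.1 : ℤ) - (σ p.2 : ℤ)) * ((σ' p.1 : ℤ) - (σ' p.2 : ℤ)) < 0)).card

lemma sign_iff (x y x' y' t : ℤ) (h : x < y ↔ x' < y') (h2 : x = y ↔ x' = y') :
    ((x - y) * t < 0 ↔ (x' - y') * t < 0) := by
  rw [mul_neg_iff, mul_neg_iff]; omega

lemma swap_kendall (m : ℕ) (σ τ : Equiv.Perm (Fin m)) (i j : Fin m) (hij : i ≠ j)
    (hadj : (σ i : ℕ) + 1 = (σ j : ℕ)) :
    kendallTau m (Equiv.swap (σ i) (σ j) * σ) τ + (if τ j < τ i then 1 else 0)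
      = kendallTau m σ τ + (if τ i < τ j then 1 else 0) := by
  classical
  set σ' := Equiv.swap (σ i) (σ j) * σ with hσ'
  have hs'i : σ' i = σ j := by
    simp [hσ', Equiv.Perm.mul_apply]
  have hs'j : σ' j = σ i := by
    simp [hσ', Equiv.Perm.mul_apply]
  have hs'ne : ∀ a, a ≠ i → a ≠ j → σ' a = σ a := fun a h1 h2 => by
    simp [hσ', Equiv.Perm.mul_apply,
      Equiv.swap_apply_of_ne_of_ne (σ.injective.ne h1) (σ.injective.ne h2)]
  set q0 : Fin m × Fin m := if i < j then (i, j) else (j, i) with hq0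
  have hmem : q0 ∈ (Finset.univ : Finset (Fin m × Fin m)) := Finset.mem_univ _
  have hcard : ∀ ρ : Equiv.Perm (Fin m), kendallTau m ρ τ =
      ∑ p : Fin m × Fin m, (if (p.1 < p.2 ∧
        ((ρ p.1 : ℤ) - (ρ p.2 : ℤ)) * ((τ p.1 : ℤ) - (τ p.2 : ℤ)) < 0) then 1 else 0) :=
    fun ρ => Finset.card_filter _ _
  have hτne : (τ i : ℕ) ≠ (τ j : ℕ) := fun h => hij (τ.injective (Fin.val_injective h))
  have hτlt1 : τ j < τ i ↔ (τ j : ℤ) < (τ i : ℤ) := by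
    rw [Fin.lt_def]; exact_mod_cast Iff.rfl
  have hτlt2 : τ i < τ j ↔ (τ i : ℤ) < (τ j : ℤ) := by
    rw [Fin.lt_def]; exact_mod_cast Iff.rfl
  have hq0c' : (if (q0.1 < q0.2 ∧
        ((σ' q0.1 : ℤ) - (σ' q0.2 : ℤ)) * ((τ q0.1 : ℤ) - (τ q0.2 : ℤ)) < 0) then 1 else 0)
      = (if τ i < τ j then 1 else 0) := by
    by_cases hij' : i < j
    · simp only [hq0, if_pos hij']
      have e1 : ((σ' i : ℤ) - (σ' j : ℤ)) = 1 := by rw [hs'i, hs'j]; push_cast; omega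
      simp only [e1, one_mul, hij', true_and, sub_neg, ← hτlt2]
    · have hji : j < i := (hij.lt_or_gt).resolve_left hij'
      simp only [hq0, if_neg hij']
      have e1 : ((σ' j : ℤ) - (σ' i : ℤ)) = -1 := by rw [hs'i, hs'j]; push_cast; omega
      simp only [e1, neg_one_mul, hji, true_and, hτlt2]
      split_ifs <;> omega
  have hq0c : (if (q0.1 < q0.2 ∧
        ((σ q0.1 : ℤ) - (σ q0.2 : ℤ)) * ((τ q0.1 : ℤ) - (τ q0.2 : ℤ)) < 0) then 1 else 0)
      = (if τ j < τ i then 1 else 0) := by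
    by_cases hij' : i < j
    · simp only [hq0, if_pos hij']
      have e1 : ((σ i : ℤ) - (σ j : ℤ)) = -1 := by push_cast; omega
      simp only [e1, neg_one_mul, hij', true_and, hτlt1]
      split_ifs <;> omega
    · have hji : j < i := (hij.lt_or_gt).resolve_left hij'
      simp only [hq0, if_neg hij']
      have e1 : ((σ j : ℤ) - (σ i : ℤ)) = 1 := by push_cast; omega
      simp only [e1, one_mul, hji, true_and, sub_neg, ← hτlt1]
  have hrest : ∀ p ∈ Finset.univ.erase q0,
      (if (p.1 < p.2 ∧
        ((σ' p.1 : ℤ) - (σ' p.2 : ℤ)) * ((τ p.1 : ℤ) - (τ p.2 : ℤ)) < 0) then 1 else 0)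
      = (if (p.1 < p.2 ∧
        ((σ p.1 : ℤ) - (σ p.2 : ℤ)) * ((τ p.1 : ℤ) - (τ p.2 : ℤ)) < 0) then (1:ℕ) else 0) := by
    intro p hp
    have hpne : p ≠ q0 := Finset.ne_of_mem_erase hp
    by_cases hlt : p.1 < p.2
    swap
    · simp [hlt]
    have hne12 : p.1 ≠ p.2 := ne_of_lt hlt
    have hnij : ¬(p.1 = i ∧ p.2 = j) := by
      rintro ⟨e1, e2⟩
      exact hpne (by rw [hq0, if_pos (e1 ▸ e2 ▸ hlt)]; exact Prod.ext e1 e2)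
    have hnji : ¬(p.1 = j ∧ p.2 = i) := by
      rintro ⟨e1, e2⟩
      have hji : j < i := e1 ▸ e2 ▸ hlt
      exact hpne (by rw [hq0, if_neg (asymm hji)]; exact Prod.ext e1 e2)
    have hmain : ((σ' p.1 : ℕ) < (σ' p.2 : ℕ) ↔ (σ p.1 : ℕ) < (σ p.2 : ℕ)) ∧
        ((σ' p.1 : ℕ) = (σ' p.2 : ℕ) ↔ (σ p.1 : ℕ) = (σ p.2 : ℕ)) := by
      have hvne : ∀ a b : Fin m, a ≠ b → (σ a : ℕ) ≠ (σ b : ℕ) :=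
        fun a b h hh => h (σ.injective (Fin.val_injective hh))
      rcases eq_or_ne p.1 i with e1i | e1i
      · have e2i : p.2 ≠ i := fun h => hne12 (e1i.trans h.symm)
        have e2j : p.2 ≠ j := fun h => hnij ⟨e1i, h⟩
        rw [e1i, hs'i, hs'ne p.2 e2i e2j]
        have h1 := hvne p.2 i e2i
        have h2 := hvne p.2 j e2j
        omega
      · rcases eq_or_ne p.1 j with e1j | e1j
        · have e2j : p.2 ≠ j := fun h => hne12 (e1j.trans h.symm)
          have e2i : p.2 ≠ i := fun h => hnji ⟨e1j, h⟩
          rw [e1j, hs'j, hs'ne p.2 e2i e2j]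
          have h1 := hvne p.2 i e2i
          have h2 := hvne p.2 j e2j
          omega
        · rcases eq_or_ne p.2 i with e2i | e2i
          · rw [e2i, hs'ne p.1 e1i e1j, hs'i]
            have h1 := hvne p.1 i e1i
            have h2 := hvne p.1 j e1j
            omega
          · rcases eq_or_ne p.2 j with e2j | e2j
            · rw [e2j, hs'ne p.1 e1i e1j, hs'j]
              have h1 := hvne p.1 i e1i
              have h2 := hvne p.1 j e1j
              omega
            · rw [hs'ne p.1 e1i e1j, hs'ne p.2 e2i e2j]
              omega
    have key := sign_iff (σ' p.1 : ℤ) (σ' p.2 : ℤ) (σ p.1 : ℤ) (σ p.2 : ℤ)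
      ((τ p.1 : ℤ) - (τ p.2 : ℤ)) (by exact_mod_cast hmain.1) (by exact_mod_cast hmain.2)
    simp [hlt, key]
  rw [hcard σ', hcard σ, ← Finset.sum_erase_add _ _ hmem, ← Finset.sum_erase_add _ _ hmem,
    Finset.sum_congr rfl hrest, hq0c', hq0c]
  omega

/-- Local Kemenization correctness for an adjacent transposition: if `σ` places
item `i` immediately before item `j` but a strict majority of the voters prefer
`j` to `i` (`p_{ij} < 1/2`), then swapping the ranks of `i` and `j` strictly
decreases the total Kendall tau distance to the voters' rankings. -/
theorem local_kemenization_swap (n m : ℕ) (hn : 1 ≤ n)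
    (σ : Equiv.Perm (Fin m)) (σv : Fin n → Equiv.Perm (Fin m))
    (i j : Fin m) (hij : i ≠ j) (hadj : (σ i : ℕ) + 1 = (σ j : ℕ))
    (p : ℝ) (hp : p = (1 / n : ℝ) * ∑ v, if σv v i < σv v j then (1:ℝ) else 0)
    (hmaj : p < 1/2) :
    ∑ v, kendallTau m (Equiv.swap (σ i) (σ j) * σ) (σv v)
      < ∑ v, kendallTau m σ (σv v) := by
  classical
  set k := (Finset.univ.filter (fun v : Fin n => σv v i < σv v j)).card with hk
  have hsum : ∑ v, (if σv v i < σv v j then (1:ℝ) else 0) = (k : ℝ) := by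
    rw [hk, Finset.sum_boole]
  have h2k : 2 * k < n := by
    have hn' : (0:ℝ) < n := by exact_mod_cast hn
    rw [hp, hsum, one_div, inv_mul_eq_div, div_lt_iff₀ hn'] at hmaj
    have : 2 * (k:ℝ) < n := by linarith
    exact_mod_cast this
  have hS : (∑ v, kendallTau m (Equiv.swap (σ i) (σ j) * σ) (σv v))
      + ∑ v, (if σv v j < σv v i then (1:ℕ) else 0)
      = (∑ v, kendallTau m σ (σv v)) + ∑ v, (if σv v i < σv v j then (1:ℕ) else 0) := by
    rw [← Finset.sum_add_distrib, ← Finset.sum_add_distrib]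
    exact Finset.sum_congr rfl fun v _ => swap_kendall m σ (σv v) i j hij hadj
  have hA : ∑ v, (if σv v i < σv v j then (1:ℕ) else 0) = k := by
    rw [hk, Finset.card_filter]
  have hB : ∑ v, (if σv v j < σv v i then (1:ℕ) else 0)
      + ∑ v, (if σv v i < σv v j then (1:ℕ) else 0) = n := by
    rw [← Finset.sum_add_distrib]
    have h1 : ∀ v : Fin n, (if σv v j < σv v i then (1:ℕ) else 0)
        + (if σv v i < σv v j then (1:ℕ) else 0) = 1 := by
      intro v
      have hne : σv v i ≠ σv v j := fun h => hij ((σv v).injective h)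
      rcases lt_trichotomy (σv v i) (σv v j) with h | h | h
      · simp [h, asymm h]
      · exact absurd h hne
      · simp [h, asymm h]
    simp [h1]
  omega
end

section
/- For rankings σ_1,...,σ_n ∈ S_m, the permutation minimizing ∑_v d_2(σ, σ_v), where d_2(σ,σ') = ∑_i (σ(i) - σ'(i))², is the Borda consensus: when the Borda scores s_i = (1/n)∑_v σ_v(i) are pairwise distinct, the unique minimizer is the permutation ranking items in ascending order of s_i. -/
/-- Spearman's rank correlation distance `d₂(σ, σ') = ∑ᵢ (σ(i) - σ'(i))²`. -/
def spearman (m : ℕ) (σ σ' : Equiv.Perm (Fin m)) : ℝ :=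
  ∑ i, ((σ i : ℝ) - (σ' i : ℝ))^2

/-- When the Borda scores `sᵢ = (1/n) ∑ᵥ σᵥ(i)` are pairwise distinct, the
unique minimizer of `∑ᵥ d₂(·, σᵥ)` is the permutation ranking items in
ascending order of their Borda scores. -/
theorem borda_minimizes_spearman (n m : ℕ) (hn : 1 ≤ n)
    (σv : Fin n → Equiv.Perm (Fin m)) (s : Fin m → ℝ)
    (hs : ∀ i, s i = (1 / n : ℝ) * ∑ v, (σv v i : ℝ))
    (hdist : Function.Injective s) :
    ∃ π : Equiv.Perm (Fin m),
      (∀ i j, s i < s j ↔ (π i : ℕ) < (π j : ℕ)) ∧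
      ∀ τ : Equiv.Perm (Fin m), τ ≠ π →
        ∑ v, spearman m π (σv v) < ∑ v, spearman m τ (σv v) := by
  have hn0 : (n : ℝ) ≠ 0 := by positivity
  -- construct the sorting permutation π
  set t : Finset ℝ := Finset.univ.image s with ht_def
  have ht : t.card = m := by
    rw [ht_def, Finset.card_image_of_injective _ hdist, Finset.card_univ, Fintype.card_fin]
  let e := t.orderIsoOfFin ht
  have hmem : ∀ i, s i ∈ t := fun i => Finset.mem_image_of_mem s (Finset.mem_univ i)
  let f : Fin m → Fin m := fun i => e.symm ⟨s i, hmem i⟩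
  have hfinj : Function.Injective f := by
    intro i j hij
    apply hdist
    have := e.symm.injective hij
    exact congrArg Subtype.val this
  let π : Equiv.Perm (Fin m) := Equiv.ofBijective f (Finite.injective_iff_bijective.mp hfinj)
  have hπ : ∀ i j, s i < s j ↔ (π i : ℕ) < (π j : ℕ) := by
    intro i j
    have : π i < π j ↔ s i < s j := by
      show f i < f j ↔ _
      rw [e.symm.lt_iff_lt, Subtype.mk_lt_mk]
    rw [← this]; rfl
  refine ⟨π, hπ, ?_⟩
  -- the sum of σv values equals n * s i
  have hsum : ∀ i, ∑ v, (σv v i : ℝ) = n * s i := by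
    intro i
    rw [hs i]; field_simp
  -- key formula for the objective
  have key : ∀ τ : Equiv.Perm (Fin m), ∑ v, spearman m τ (σv v) =
      (n : ℝ) * ∑ i : Fin m, ((i : ℕ) : ℝ)^2 + (∑ v, ∑ i, ((σv v i : ℕ) : ℝ)^2)
        - 2 * n * ∑ i, s i * ((τ i : ℕ) : ℝ) := by
    intro τ
    have h1 : ∀ v, spearman m τ (σv v) =
        (∑ i, ((τ i : ℕ) : ℝ)^2) - 2 * ∑ i, ((τ i : ℕ) : ℝ) * (σv v i : ℝ)
          + ∑ i, ((σv v i : ℕ) : ℝ)^2 := by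
      intro v
      unfold spearman
      simp_rw [sub_sq, mul_assoc]
      rw [Finset.sum_add_distrib, Finset.sum_sub_distrib, ← Finset.mul_sum]
    have h2 : (∑ i, ((τ i : ℕ) : ℝ)^2) = ∑ i : Fin m, ((i : ℕ) : ℝ)^2 :=
      Equiv.sum_comp τ (fun i => ((i : ℕ) : ℝ)^2)
    simp_rw [h1, h2]
    rw [Finset.sum_add_distrib, Finset.sum_sub_distrib, Finset.sum_const, Finset.card_univ,
      Fintype.card_fin, nsmul_eq_mul, ← Finset.mul_sum]
    have h3 : ∑ v, ∑ i, ((τ i : ℕ) : ℝ) * (σv v i : ℝ)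
        = ∑ i, s i * ((τ i : ℕ) : ℝ) * n := by
      rw [Finset.sum_comm]
      refine Finset.sum_congr rfl fun i _ => ?_
      rw [← Finset.mul_sum, hsum i]; ring
    rw [h3, ← Finset.sum_mul]
    ring
  -- monovariance of s with π
  have hmono : Monovary s (fun i => ((π i : ℕ) : ℝ)) := by
    intro i j hij
    have h : ((π i : ℕ) : ℝ) < ((π j : ℕ) : ℝ) := hij
    exact le_of_lt ((hπ i j).mpr (by exact_mod_cast h))
  intro τ hτ
  rw [key τ, key π]
  have hlt : ∑ i, s i * ((τ i : ℕ) : ℝ) < ∑ i, s i * ((π i : ℕ) : ℝ) := by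
    set ρ : Equiv.Perm (Fin m) := π⁻¹ * τ with hρ
    have hcomp : ∀ i, ((π (ρ i) : ℕ) : ℝ) = ((τ i : ℕ) : ℝ) := by
      intro i; simp [hρ]
    have := hmono.sum_mul_comp_perm_lt_sum_mul_iff (σ := ρ)
    simp only [Function.comp_def] at this
    simp_rw [hcomp] at this
    rw [this]
    -- show ¬ Monovary s (fun i => (τ i : ℝ))
    intro hM
    apply hτ
    -- τ and π induce the same strict order, hence are equal
    have horder : ∀ i j, π i < π j ↔ τ i < τ j := by
      intro i j
      constructor
      · intro hij
        have hsij : s i < s j := (hπ i j).mpr hij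
        rcases lt_trichotomy (τ i) (τ j) with h | h | h
        · exact h
        · exact absurd (congrArg s (τ.injective h)) (ne_of_lt hsij)
        · have : s j ≤ s i := hM (show ((τ j : ℕ) : ℝ) < ((τ i : ℕ) : ℝ) by exact_mod_cast h)
          exact absurd hsij (not_lt.mpr this)
      · intro hij
        have hsle : s i ≤ s j := hM (show ((τ i : ℕ) : ℝ) < ((τ j : ℕ) : ℝ) by exact_mod_cast hij)
        have hne : i ≠ j := fun h => by subst h; exact lt_irrefl _ hij
        have hslt : s i < s j := lt_of_le_of_ne hsle (fun h => hne (hdist h))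
        exact_mod_cast (hπ i j).mp hslt
    have hu : StrictMono (τ ∘ π.symm : Fin m → Fin m) := by
      intro a b hab
      have : π (π.symm a) < π (π.symm b) := by simpa using hab
      exact (horder _ _).mp this
    have hid : (τ ∘ π.symm : Fin m → Fin m) = id := by
      haveI : WellFoundedLT (Fin m) := inferInstance
      refine (hu.range_inj (strictMono_id (α := Fin m))).mp ?_
      rw [Set.range_comp, Set.range_eq_univ.mpr π.symm.surjective, Set.image_univ,
        Set.range_eq_univ.mpr τ.surjective, Set.range_id]
    ext i
    have h2 : τ (π.symm (π i)) = π i := congrFun hid (π i)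
    rw [Equiv.symm_apply_apply] at h2
    exact congrArg Fin.val h2
  have h2n : (0:ℝ) < 2 * n := by positivity
  nlinarith [mul_lt_mul_of_pos_left hlt h2n]
end
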